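/- The marginal densities of the Freund bivariate distribution are exponential if and only if α₁=β₁ and α₂=β₂. -/

import Mathlib

open MeasureTheory Real

/-- The Freund bivariate mixture exponential density. -/
noncomputable def freund (a1 b1 a2 b2 : ℝ) (x y : ℝ) : ℝ :=
  if 0 < x ∧ x < y then a1 * b2 * Real.exp (-b2 * y - (a1 + a2 - b2) * x)
  else if 0 < y ∧ y < x then a2 * b1 * Real.exp (-b1 * x - (a1 + a2 - b1) * y)
  else 0

/-- Marginal density of X. -/
noncomputable def freundMarginalX (a1 b1 a2 b2 : ℝ) (x : ℝ) : ℝ :=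
  ∫ y in Set.Ioi (0:ℝ), freund a1 b1 a2 b2 x y

/-- Marginal density of Y. -/
noncomputable def freundMarginalY (a1 b1 a2 b2 : ℝ) (y : ℝ) : ℝ :=
  ∫ x in Set.Ioi (0:ℝ), freund a1 b1 a2 b2 x y

/-!
For `x > 0` the marginal of `X` is `(a1 - K) e^{-(a1+a2)x} + K e^{-b1 x}` with
`K = a2 b1 / (a1 + a2 - b1)`, or `(a1 + a2 b1 x) e^{-b1 x}` when `a1 + a2 = b1`.
An exponential density `f` satisfies `f(2)² = f(1) f(3)`, which fails both for a combination of
two distinct exponentials with nonzero coefficients and for a nonconstant affine function times an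
exponential. Hence the marginal is exponential exactly when `a1 = K`, i.e. when
`(a1 - b1)(a1 + a2) = 0`. The marginal of `Y` is that of `X` with the two indices swapped.
-/

open Set

theorem integral_exp_neg_mul {c : ℝ} (hc : c ≠ 0) (x : ℝ) :
    ∫ y in (0 : ℝ)..x, exp (-c * y) = (1 - exp (-c * x)) / c := by
  rw [intervalIntegral.integral_comp_mul_left exp (neg_ne_zero.2 hc), integral_exp, mul_zero,
    exp_zero, smul_eq_mul]
  field_simp
  ring

theorem sq_eq_mul_of_eq_mul_exp {f : ℝ → ℝ} {C l : ℝ} (h : ∀ x > 0, f x = C * exp (-l * x)) :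
    f 2 ^ 2 = f 1 * f 3 := by
  rw [h 1 one_pos, h 2 two_pos, h 3 three_pos]
  have : exp (-l * 2) ^ 2 = exp (-l * 1) * exp (-l * 3) := by
    rw [sq, ← exp_add, ← exp_add]; ring_nf
  linear_combination C ^ 2 * this

theorem add_exp_ne_mul_exp {A B u v : ℝ} (hA : A ≠ 0) (hB : B ≠ 0) (huv : u ≠ v) (C l : ℝ) :
    ¬ ∀ x > 0, A * exp (-u * x) + B * exp (-v * x) = C * exp (-l * x) := by
  intro h
  have key := sq_eq_mul_of_eq_mul_exp h
  simp only [mul_one, exp_mul, rpow_ofNat] at key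
  have hpq : exp (-u) - exp (-v) ≠ 0 := by simpa [sub_eq_zero] using huv
  have : A * B * exp (-u) * exp (-v) * (exp (-u) - exp (-v)) ^ 2 = 0 := by
    linear_combination -key
  simp [hA, hB, hpq, exp_ne_zero] at this

theorem affine_mul_exp_ne_mul_exp {a c u : ℝ} (hc : c ≠ 0) (C l : ℝ) :
    ¬ ∀ x > 0, (a + c * x) * exp (-u * x) = C * exp (-l * x) := by
  intro h
  have key := sq_eq_mul_of_eq_mul_exp h
  simp only [mul_one, exp_mul, rpow_ofNat] at key
  have : c ^ 2 * exp (-u) ^ 4 = 0 := by linear_combination key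
  simp [hc, exp_ne_zero] at this

section
variable {a1 b1 a2 b2 x : ℝ}

theorem freundMarginalX_eq (hb2 : 0 < b2) (hx : 0 < x) :
    freundMarginalX a1 b1 a2 b2 x = a1 * exp (-(a1 + a2) * x)
      + a2 * b1 * exp (-b1 * x) * ∫ y in (0 : ℝ)..x, exp (-(a1 + a2 - b1) * y) := by
  have below : EqOn (freund a1 b1 a2 b2 x)
      (fun y ↦ a2 * b1 * exp (-b1 * x) * exp (-(a1 + a2 - b1) * y)) (Ioo 0 x) := by
    intro y hy
    rw [freund, if_neg fun h ↦ (h.2.trans hy.2).false, if_pos (show 0 < y ∧ y < x from hy)]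
    simp only [mul_assoc, ← exp_add]
    ring_nf
  have above : EqOn (freund a1 b1 a2 b2 x)
      (fun y ↦ a1 * b2 * exp (-(a1 + a2 - b2) * x) * exp (-b2 * y)) (Ioi x) := by
    intro y hy
    rw [freund, if_pos ⟨hx, hy⟩]
    simp only [mul_assoc, ← exp_add]
    ring_nf
  have below_int : IntervalIntegrable (freund a1 b1 a2 b2 x) volume 0 x := by
    rw [intervalIntegrable_iff_integrableOn_Ioo_of_le hx.le]
    refine IntegrableOn.congr_fun ?_ below.symm measurableSet_Ioo
    exact (Continuous.integrableOn_Icc (by fun_prop)).mono_set Ioo_subset_Icc_self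
  have above_int : IntegrableOn (freund a1 b1 a2 b2 x) (Ioi x) :=
    IntegrableOn.congr_fun ((exp_neg_integrableOn_Ioi x hb2).const_mul _) above.symm
      measurableSet_Ioi
  have hexp : exp (-(a1 + a2 - b2) * x) * exp (-b2 * x) = exp (-(a1 + a2) * x) := by
    rw [← exp_add]; ring_nf
  rw [freundMarginalX, ← intervalIntegral.integral_interval_add_Ioi' below_int above_int,
    intervalIntegral.integral_congr_Ioo_of_le hx.le below,
    setIntegral_congr_fun measurableSet_Ioi above, intervalIntegral.integral_const_mul,
    integral_const_mul, integral_exp_mul_Ioi (neg_lt_zero.2 hb2), ← hexp]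
  field_simp
  ring

theorem freundMarginalX_eq_of_ne (hb2 : 0 < b2) (hs : a1 + a2 ≠ b1) (hx : 0 < x) :
    freundMarginalX a1 b1 a2 b2 x = (a1 - a2 * b1 / (a1 + a2 - b1)) * exp (-(a1 + a2) * x)
      + a2 * b1 / (a1 + a2 - b1) * exp (-b1 * x) := by
  have hexp : exp (-b1 * x) * exp (-(a1 + a2 - b1) * x) = exp (-(a1 + a2) * x) := by
    rw [← exp_add]; ring_nf
  rw [freundMarginalX_eq hb2 hx, integral_exp_neg_mul (sub_ne_zero.2 hs), ← hexp]
  field_simp [sub_ne_zero.2 hs]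
  ring

theorem freundMarginalX_eq_of_eq (hb2 : 0 < b2) (hs : a1 + a2 = b1) (hx : 0 < x) :
    freundMarginalX a1 b1 a2 b2 x = (a1 + a2 * b1 * x) * exp (-b1 * x) := by
  rw [freundMarginalX_eq hb2 hx, hs, sub_self]
  simp only [neg_zero, zero_mul, exp_zero, intervalIntegral.integral_const, sub_zero,
    smul_eq_mul, mul_one]
  ring

theorem exists_freundMarginalX_eq_exp_iff
    (ha1 : 0 < a1) (hb1 : 0 < b1) (ha2 : 0 < a2) (hb2 : 0 < b2) :
    (∃ l > (0:ℝ), ∀ x > (0:ℝ), freundMarginalX a1 b1 a2 b2 x = l * exp (-l * x)) ↔ a1 = b1 := by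
  constructor
  · rintro ⟨l, -, hl⟩
    by_cases hs : a1 + a2 = b1
    · exact absurd (fun x hx ↦ (freundMarginalX_eq_of_eq hb2 hs hx).symm.trans (hl x hx))
        (affine_mul_exp_ne_mul_exp (by positivity) _ _)
    have hs' : a1 + a2 - b1 ≠ 0 := sub_ne_zero.2 hs
    have hK : a1 - a2 * b1 / (a1 + a2 - b1) = 0 := by
      by_contra hK
      exact add_exp_ne_mul_exp hK (div_ne_zero (by positivity) hs') (by simpa using hs) l l
        fun x hx ↦ (freundMarginalX_eq_of_ne hb2 hs hx).symm.trans (hl x hx)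
    have hfactor : (a1 - b1) * (a1 + a2) = 0 := by
      field_simp at hK
      linear_combination hK
    exact sub_eq_zero.1 ((mul_eq_zero.1 hfactor).resolve_right (by positivity))
  · rintro rfl
    have hK : a2 * a1 / (a1 + a2 - a1) = a1 := by
      rw [add_sub_cancel_left, mul_div_cancel_left₀ _ ha2.ne']
    refine ⟨a1, ha1, fun x hx ↦ ?_⟩
    rw [freundMarginalX_eq_of_ne hb2 (by linarith) hx, hK, sub_self, zero_mul, zero_add]

end

theorem freund_swap (a1 b1 a2 b2 x y : ℝ) :
    freund a2 b2 a1 b1 y x = freund a1 b1 a2 b2 x y := by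
  unfold freund
  split_ifs <;> first | (exfalso; grind) | ring_nf

theorem freundMarginalY_eq_freundMarginalX (a1 b1 a2 b2 : ℝ) :
    freundMarginalY a1 b1 a2 b2 = freundMarginalX a2 b2 a1 b1 := by
  ext y
  simp only [freundMarginalY, freundMarginalX, freund_swap]

theorem freund_marginals_exponential_iff (a1 b1 a2 b2 : ℝ)
    (ha1 : 0 < a1) (hb1 : 0 < b1) (ha2 : 0 < a2) (hb2 : 0 < b2) :
    ((∃ l1 > (0:ℝ), ∀ x > (0:ℝ),
        freundMarginalX a1 b1 a2 b2 x = l1 * Real.exp (-l1 * x)) ∧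
     (∃ l2 > (0:ℝ), ∀ y > (0:ℝ),
        freundMarginalY a1 b1 a2 b2 y = l2 * Real.exp (-l2 * y)))
    ↔ (a1 = b1 ∧ a2 = b2) := by
  rw [freundMarginalY_eq_freundMarginalX, exists_freundMarginalX_eq_exp_iff ha1 hb1 ha2 hb2,
    exists_freundMarginalX_eq_exp_iff ha2 hb2 ha1 hb1]
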